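/- Let c = (c_λ)_{λ⊢4} ∈ ℝ^5 be a coefficient vector. Then the symmetric quartic form f^{(n)} = Σ_{λ⊢4} c_λ p_λ^{(n)} is nonnegative on ℝ^n for every n ≥ 4 if and only if for all α ∈ [0,1] the bivariate quartic form Φ_c^α(x,y) := Σ_{λ⊢4} c_λ Φ_λ(α, 1−α, x, y) is nonnegative on ℝ^2. -/

import Mathlib

open MvPolynomial

/-- The i-th normalized power sum `p_i^{(n)} = (1/n)(x_1^i + ⋯ + x_n^i)`. -/
noncomputable def psum (n i : ℕ) : MvPolynomial (Fin n) ℝ :=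
  C ((n : ℝ)⁻¹) * ∑ j : Fin n, X j ^ i

/-- For a partition `λ` of `k`, `p_λ^{(n)} = p_{λ_1}^{(n)} ⋯ p_{λ_l}^{(n)}`. -/
noncomputable def pPart (n : ℕ) {k : ℕ} (lam : Nat.Partition k) : MvPolynomial (Fin n) ℝ :=
  (lam.parts.map (psum n)).prod

/-- The symmetric form `f^{(n)} = Σ_{λ ⊢ k} c_λ p_λ^{(n)}` determined by the
coefficient vector `c`. -/
noncomputable def symForm (n : ℕ) {k : ℕ} (c : Nat.Partition k → ℝ) : MvPolynomial (Fin n) ℝ :=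
  ∑ lam : Nat.Partition k, C (c lam) * pPart n lam

/-- `Φ_λ(s,t) = ∏_{i=1}^l (s_1 t_1^{λ_i} + ⋯ + s_d t_d^{λ_i})` for a partition
`λ = (λ_1,…,λ_l)` of `k`, as a function on `ℝ^d × ℝ^d`. -/
noncomputable def phiPart {k : ℕ} (d : ℕ) (lam : Nat.Partition k) (s t : Fin d → ℝ) : ℝ :=
  (lam.parts.map (fun i => ∑ j : Fin d, s j * t j ^ i)).prod

/-- `Φ_c = Σ_{λ ⊢ k} c_λ Φ_λ`. -/
noncomputable def phiForm {k : ℕ} (d : ℕ) (c : Nat.Partition k → ℝ) (s t : Fin d → ℝ) : ℝ :=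
  ∑ lam : Nat.Partition k, c lam * phiPart d lam s t

/-!
Evaluating `symForm n c` at `x` is evaluating `phiForm` at the empirical measure of `x`, and
`Φ_λ` only sees the moments of that measure. Splitting `x` into two blocks of constant value
realizes every two-point measure with weights `k/n, 1 - k/n`, so one direction follows from the
density of these weights in `[0, 1]`.

Conversely, `phiForm` involves the fourth moment only through the term `c₍₄₎ m₄`, and testing at
`α δ₁ + (1 - α) δ₀` with `α → 0` shows `c₍₄₎ ≥ 0`. By the Hankel inequality
`m₃² + m₂³ ≤ m₂ m₄` for centered measures, every finitely supported probability measure has a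
two-point measure with the same moments of order `< 4` and a smaller fourth moment (Gauss
quadrature with two nodes), at which `phiForm` is therefore no larger.
-/

open Filter Topology

namespace Nat.Partition

theorem card_parts_ne_zero {n : ℕ} (hn : n ≠ 0) (p : n.Partition) : p.parts.card ≠ 0 := by
  intro h
  apply hn
  rw [← p.parts_sum, Multiset.card_eq_zero.mp h, Multiset.sum_zero]

theorem eq_indiscrete_of_mem_parts {n : ℕ} {p : n.Partition} (h : n ∈ p.parts) :
    p = indiscrete n := by
  obtain ⟨rest, hrest⟩ := Multiset.exists_cons_of_mem h
  have hsum : rest.sum = 0 := by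
    have := p.parts_sum
    rw [hrest, Multiset.sum_cons] at this
    omega
  have hrest0 : rest = 0 := Multiset.eq_zero_of_forall_notMem fun a ha =>
    (p.parts_pos (hrest ▸ Multiset.mem_cons_of_mem ha)).ne'
      (Multiset.sum_eq_zero_iff.mp hsum a ha)
  ext1
  rw [hrest, hrest0, indiscrete_parts (p.parts_pos h).ne']
  rfl

theorem eq_indiscrete_of_card_parts_eq_one {n : ℕ} {p : n.Partition} (h : p.parts.card = 1) :
    p = indiscrete n := by
  obtain ⟨a, ha⟩ := Multiset.card_eq_one.mp h
  have han : a = n := by simpa [ha] using p.parts_sum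
  exact eq_indiscrete_of_mem_parts (by simp [ha, han])

end Nat.Partition

/-- The `i`-th moment of `∑ⱼ s j • δ (t j)`; `phiPart d λ s t` is the product of the moments of
orders `λᵢ`. -/
def atomicMoment {d : ℕ} (s t : Fin d → ℝ) (i : ℕ) : ℝ :=
  ∑ j, s j * t j ^ i

section PhiForm

variable {k d d' : ℕ} {s t : Fin d → ℝ} {s' t' : Fin d' → ℝ}

theorem phiPart_eq_of_atomicMoment_eq {lam : k.Partition}
    (h : ∀ i ∈ lam.parts, atomicMoment s t i = atomicMoment s' t' i) :
    phiPart d lam s t = phiPart d' lam s' t' :=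
  congrArg Multiset.prod (Multiset.map_congr rfl h)

theorem phiForm_eq_of_atomicMoment_eq (c : k.Partition → ℝ)
    (h : ∀ i, atomicMoment s t i = atomicMoment s' t' i) :
    phiForm d c s t = phiForm d' c s' t' :=
  Finset.sum_congr rfl fun _ _ => by rw [phiPart_eq_of_atomicMoment_eq fun i _ => h i]

theorem phiForm_eq_add_of_atomicMoment_eq (hk : k ≠ 0) (c : k.Partition → ℝ)
    (h : ∀ i < k, atomicMoment s t i = atomicMoment s' t' i) :
    phiForm d c s t = phiForm d' c s' t' +
      c (.indiscrete k) * (atomicMoment s t k - atomicMoment s' t' k) := by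
  rw [← sub_eq_iff_eq_add', phiForm, phiForm, ← Finset.sum_sub_distrib,
    Finset.sum_eq_single (.indiscrete k)]
  · simp [phiPart, Nat.Partition.indiscrete_parts hk, atomicMoment, mul_sub]
  · intro lam _ hlam
    rw [phiPart_eq_of_atomicMoment_eq fun i hi => h i ?_, sub_self]
    exact (Nat.Partition.le_of_mem_parts hi).lt_of_ne
      fun hik => hlam (Nat.Partition.eq_indiscrete_of_mem_parts (hik ▸ hi))
  · simp

end PhiForm

theorem eval_symForm (n : ℕ) {k : ℕ} (c : k.Partition → ℝ) (x : Fin n → ℝ) :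
    eval x (symForm n c) = phiForm n c (fun _ => (n : ℝ)⁻¹) x := by
  rw [symForm, phiForm, map_sum]
  refine Finset.sum_congr rfl fun lam _ => ?_
  rw [map_mul, eval_C, pPart, phiPart, map_multiset_prod, Multiset.map_map]
  congr 2
  refine Multiset.map_congr rfl fun i _ => ?_
  simp only [Function.comp_apply, _root_.psum, map_mul, eval_C, map_sum, map_pow, eval_X,
    Finset.mul_sum]

theorem atomicMoment_two (α β x y : ℝ) (i : ℕ) :
    atomicMoment ![α, β] ![x, y] i = α * x ^ i + β * y ^ i := by
  simp [atomicMoment, Fin.sum_univ_two]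

theorem atomicMoment_uniform_blocks {n k : ℕ} (hn : n ≠ 0) (hk : k ≤ n) (x y : ℝ) (i : ℕ) :
    atomicMoment (fun _ : Fin n => (n : ℝ)⁻¹) (fun j => if (j : ℕ) < k then x else y) i =
      atomicMoment ![(k : ℝ) / n, 1 - k / n] ![x, y] i := by
  obtain ⟨l, rfl⟩ := Nat.exists_eq_add_of_le hk
  have hsum : ∑ j : Fin (k + l), (if (j : ℕ) < k then x else y) ^ i = k * x ^ i + l * y ^ i := by
    rw [Fin.sum_univ_eq_sum_range (fun j => (if j < k then x else y) ^ i),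
      Finset.sum_range_add, Finset.sum_congr rfl fun j hj => by
        rw [if_pos (Finset.mem_range.mp hj)]]
    simp
  rw [atomicMoment_two]
  simp only [atomicMoment, ← Finset.mul_sum, hsum]
  field_simp
  push_cast
  ring

theorem continuous_phiForm_two {k : ℕ} (c : k.Partition → ℝ) (x y : ℝ) :
    Continuous fun α => phiForm 2 c ![α, 1 - α] ![x, y] := by
  refine continuous_finsetSum _ fun lam _ =>
    continuous_const.mul (continuous_multiset_prod _ fun i _ => ?_)
  simp only [Fin.sum_univ_two, Matrix.cons_val_zero, Matrix.cons_val_one]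
  fun_prop

theorem phiForm_two_nonneg_of_eval_symForm_nonneg {k : ℕ} {c : k.Partition → ℝ} (N : ℕ)
    (h : ∀ n, N ≤ n → ∀ x : Fin n → ℝ, 0 ≤ eval x (symForm n c))
    {α : ℝ} (hα0 : 0 ≤ α) (hα1 : α ≤ 1) (x y : ℝ) :
    0 ≤ phiForm 2 c ![α, 1 - α] ![x, y] := by
  have hlim : Tendsto (fun n : ℕ => (⌊α * n⌋₊ : ℝ) / n) atTop (𝓝 α) :=
    (tendsto_nat_floor_mul_div_atTop hα0).comp tendsto_natCast_atTop_atTop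
  refine ge_of_tendsto (((continuous_phiForm_two c x y).tendsto α).comp hlim) ?_
  filter_upwards [eventually_ge_atTop (max N 1)] with n hn
  have hkn : ⌊α * n⌋₊ ≤ n := Nat.floor_le_of_le (mul_le_of_le_one_left n.cast_nonneg hα1)
  have := h n (le_of_max_le_left hn) fun j => if (j : ℕ) < ⌊α * n⌋₊ then x else y
  rwa [eval_symForm, phiForm_eq_of_atomicMoment_eq c
    (atomicMoment_uniform_blocks (by omega) hkn x y)] at this

theorem phiForm_two_one_zero {k : ℕ} (c : k.Partition → ℝ) (α : ℝ) :
    phiForm 2 c ![α, 1 - α] ![1, 0] = ∑ lam, c lam * α ^ lam.parts.card := by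
  refine Finset.sum_congr rfl fun lam _ => ?_
  rw [phiPart, Multiset.map_congr rfl (g := fun _ => α), Multiset.map_const',
    Multiset.prod_replicate]
  intro i hi
  simp [Fin.sum_univ_two, (lam.parts_pos hi).ne']

theorem coeff_indiscrete_nonneg {k : ℕ} (hk : k ≠ 0) {c : k.Partition → ℝ}
    (h : ∀ α : ℝ, 0 ≤ α → α ≤ 1 → 0 ≤ phiForm 2 c ![α, 1 - α] ![1, 0]) :
    0 ≤ c (.indiscrete k) := by
  set g : ℝ → ℝ := fun α => ∑ lam, c lam * α ^ (lam.parts.card - 1)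
  have hg0 : g 0 = c (.indiscrete k) := by
    simp only [g]
    rw [Finset.sum_eq_single (Nat.Partition.indiscrete k)]
    · simp [Nat.Partition.indiscrete_parts hk]
    · intro lam _ hlam
      have : lam.parts.card - 1 ≠ 0 := fun h1 => hlam <|
        Nat.Partition.eq_indiscrete_of_card_parts_eq_one
          (by have := Nat.Partition.card_parts_ne_zero hk lam; omega)
      simp [this]
    · simp
  have hg : ∀ α, 0 < α → α ≤ 1 → 0 ≤ g α := fun α hα0 hα1 => by
    refine nonneg_of_mul_nonneg_left ?_ hα0
    simpa [g, Finset.sum_mul, mul_assoc, pow_sub_one_mul (Nat.Partition.card_parts_ne_zero hk _),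
      ← phiForm_two_one_zero] using h α hα0.le hα1
  rw [← hg0]
  refine ge_of_tendsto ((by fun_prop : Continuous g).continuousWithinAt.tendsto
    (s := Set.Ioi 0)) ?_
  filter_upwards [Ioc_mem_nhdsGT one_pos] with α hα using hg α hα.1 hα.2

section Moments

variable {d d' : ℕ}

theorem atomicMoment_add_const (s t : Fin d → ℝ) (m : ℝ) (i : ℕ) :
    atomicMoment s (fun j => t j + m) i =
      ∑ k ∈ Finset.range (i + 1), atomicMoment s t k * m ^ (i - k) * i.choose k := by
  simp only [atomicMoment, add_pow, Finset.mul_sum, Finset.sum_mul]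
  rw [Finset.sum_comm]
  exact Finset.sum_congr rfl fun k _ => Finset.sum_congr rfl fun j _ => by ring

theorem atomicMoment_add_const_eq_and_le {s t : Fin d → ℝ} {s' t' : Fin d' → ℝ} {K : ℕ}
    (heq : ∀ i < K, atomicMoment s' t' i = atomicMoment s t i)
    (hle : atomicMoment s' t' K ≤ atomicMoment s t K) (m : ℝ) :
    (∀ i < K, atomicMoment s' (fun j => t' j + m) i = atomicMoment s (fun j => t j + m) i) ∧
      atomicMoment s' (fun j => t' j + m) K ≤ atomicMoment s (fun j => t j + m) K := by
  refine ⟨fun i hi => ?_, ?_⟩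
  · simp only [atomicMoment_add_const]
    exact Finset.sum_congr rfl fun k hk => by
      rw [heq k (by have := Finset.mem_range.mp hk; omega)]
  · simp only [atomicMoment_add_const, Finset.sum_range_succ, Nat.sub_self, pow_zero,
      Nat.choose_self, Nat.cast_one, mul_one]
    exact add_le_add (Finset.sum_congr rfl fun k hk => by
      rw [heq k (Finset.mem_range.mp hk)]).le hle

variable {s t : Fin d → ℝ}

theorem sum_mul_quadratic_sq (s t : Fin d → ℝ) (a b c : ℝ) :
    ∑ j, s j * (a * t j ^ 2 + b * t j + c) ^ 2 =
      a ^ 2 * atomicMoment s t 4 + 2 * a * b * atomicMoment s t 3 +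
        (b ^ 2 + 2 * a * c) * atomicMoment s t 2 + 2 * b * c * atomicMoment s t 1 +
        c ^ 2 * atomicMoment s t 0 := by
  simp only [atomicMoment, Finset.mul_sum, ← Finset.sum_add_distrib]
  exact Finset.sum_congr rfl fun j _ => by ring

theorem sq_add_cube_le_mul (hs : ∀ j, 0 ≤ s j) (h0 : atomicMoment s t 0 = 1)
    (h1 : atomicMoment s t 1 = 0) (h2 : 0 < atomicMoment s t 2) :
    atomicMoment s t 3 ^ 2 + atomicMoment s t 2 ^ 3 ≤ atomicMoment s t 2 * atomicMoment s t 4 := by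
  have hsq := Finset.sum_nonneg fun j (_ : j ∈ Finset.univ) => mul_nonneg (hs j) (sq_nonneg
    (atomicMoment s t 2 * t j ^ 2 + -atomicMoment s t 3 * t j + -atomicMoment s t 2 ^ 2))
  rw [sum_mul_quadratic_sq, h0, h1] at hsq
  nlinarith

theorem exists_pos_mul_eq_sub_eq {u : ℝ} (hu : 0 < u) (δ : ℝ) :
    ∃ a b : ℝ, 0 < a ∧ 0 < b ∧ a * b = u ∧ a - b = δ := by
  set r := Real.sqrt (δ ^ 2 + 4 * u)
  have hr : r ^ 2 = δ ^ 2 + 4 * u := Real.sq_sqrt (by positivity)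
  have hr0 : 0 ≤ r := Real.sqrt_nonneg _
  refine ⟨(r + δ) / 2, (r - δ) / 2, ?_, ?_, by linear_combination hr / 4, by ring⟩ <;>
    nlinarith

/-- The witness has atoms `a, -b` with weights `b / (a + b), a / (a + b)`, whose moments are
`1, 0, ab, ab (a - b), ab (a² - ab + b²)`; choosing `ab = m₂` and `a - b = m₃ / m₂` makes the
fourth one `(m₃² + m₂³) / m₂`. -/
theorem exists_two_point_of_centered (hs : ∀ j, 0 ≤ s j) (h0 : atomicMoment s t 0 = 1)
    (h1 : atomicMoment s t 1 = 0) :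
    ∃ α x y : ℝ, 0 ≤ α ∧ α ≤ 1 ∧
      (∀ i < 4, atomicMoment ![α, 1 - α] ![x, y] i = atomicMoment s t i) ∧
      atomicMoment ![α, 1 - α] ![x, y] 4 ≤ atomicMoment s t 4 := by
  have hM2 : 0 ≤ atomicMoment s t 2 :=
    Finset.sum_nonneg fun j _ => mul_nonneg (hs j) (sq_nonneg (t j))
  rcases hM2.eq_or_lt with h2 | h2
  · have hsq : ∀ j, s j * t j ^ 2 = 0 := fun j => (Finset.sum_eq_zero_iff_of_nonneg
      (fun j _ => mul_nonneg (hs j) (sq_nonneg (t j)))).mp h2.symm j (Finset.mem_univ j)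
    have h3 : atomicMoment s t 3 = 0 := Finset.sum_eq_zero fun j _ => by
      rw [pow_succ, ← mul_assoc, hsq, zero_mul]
    refine ⟨1, 0, 0, zero_le_one, le_rfl, fun i hi => ?_, ?_⟩
    · interval_cases i <;> simp [atomicMoment_two, h0, h1, ← h2, h3]
    · have hM4 : 0 ≤ atomicMoment s t 4 :=
        Finset.sum_nonneg fun j _ => mul_nonneg (hs j) (by positivity)
      simpa [atomicMoment_two] using hM4
  · obtain ⟨a, b, ha, hb, hab, hδ⟩ :=
      exists_pos_mul_eq_sub_eq h2 (atomicMoment s t 3 / atomicMoment s t 2)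
    have h3 : atomicMoment s t 3 = a * b * (a - b) := by
      rw [hab, hδ, mul_div_cancel₀ _ h2.ne']
    have hmom : ∀ i, atomicMoment ![b / (a + b), 1 - b / (a + b)] ![a, -b] i * (a + b) =
        b * a ^ i + a * (-b) ^ i := fun i => by
      rw [atomicMoment_two]; field_simp; ring
    have hab0 : 0 < a + b := by positivity
    refine ⟨b / (a + b), a, -b, by positivity, div_le_one_of_le₀ (by linarith) hab0.le,
      fun i hi => mul_right_cancel₀ hab0.ne' ?_, le_of_mul_le_mul_right ?_ hab0⟩
    · interval_cases i <;> rw [hmom]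
      · linear_combination -(a + b) * h0
      · linear_combination -(a + b) * h1
      · linear_combination (a + b) * hab
      · linear_combination -(a + b) * h3
    · have h4 : (a * b) ^ 2 * (a ^ 2 - a * b + b ^ 2) ≤ a * b * atomicMoment s t 4 := by
        have := sq_add_cube_le_mul hs h0 h1 h2
        rw [h3, ← hab] at this
        linear_combination this
      have h4' : a * b * (a ^ 2 - a * b + b ^ 2) ≤ atomicMoment s t 4 :=
        le_of_mul_le_mul_left (by linear_combination h4) (mul_pos ha hb)
      rw [hmom]
      linear_combination (a + b) * h4'

end Moments

theorem exists_two_point {d : ℕ} {s : Fin d → ℝ} (hs : ∀ j, 0 ≤ s j) (hsum : ∑ j, s j = 1)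
    (t : Fin d → ℝ) :
    ∃ α x y : ℝ, 0 ≤ α ∧ α ≤ 1 ∧
      (∀ i < 4, atomicMoment ![α, 1 - α] ![x, y] i = atomicMoment s t i) ∧
      atomicMoment ![α, 1 - α] ![x, y] 4 ≤ atomicMoment s t 4 := by
  set m := atomicMoment s t 1
  have hc0 : atomicMoment s (fun j => t j + -m) 0 = 1 := by simpa [atomicMoment] using hsum
  have hc1 : atomicMoment s (fun j => t j + -m) 1 = 0 := by
    have hM0 : atomicMoment s t 0 = 1 := by simpa [atomicMoment] using hsum
    simp [atomicMoment_add_const, Finset.sum_range_succ, hM0, m]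
  obtain ⟨α, x, y, hα0, hα1, heq, hle⟩ := exists_two_point_of_centered hs hc0 hc1
  obtain ⟨heq, hle⟩ := atomicMoment_add_const_eq_and_le heq hle m
  have hpts : (fun j => ![x, y] j + m) = ![x + m, y + m] := by
    ext j; fin_cases j <;> rfl
  simp only [hpts, neg_add_cancel_right] at heq hle
  exact ⟨α, x + m, y + m, hα0, hα1, heq, hle⟩

theorem phiForm_nonneg_of_forall_two_point {c : Nat.Partition 4 → ℝ}
    (h : ∀ α : ℝ, 0 ≤ α → α ≤ 1 → ∀ x y : ℝ, 0 ≤ phiForm 2 c ![α, 1 - α] ![x, y])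
    {d : ℕ} {s : Fin d → ℝ} (hs : ∀ j, 0 ≤ s j) (hsum : ∑ j, s j = 1) (t : Fin d → ℝ) :
    0 ≤ phiForm d c s t := by
  obtain ⟨α, x, y, hα0, hα1, heq, hle⟩ := exists_two_point hs hsum t
  rw [phiForm_eq_add_of_atomicMoment_eq four_ne_zero c fun i hi => (heq i hi).symm]
  exact add_nonneg (h α hα0 hα1 x y) (mul_nonneg
    (coeff_indiscrete_nonneg four_ne_zero fun α hα0 hα1 => h α hα0 hα1 1 0) (sub_nonneg.2 hle))

/-- A symmetric quartic `f^{(n)} = Σ_{λ⊢4} c_λ p_λ^{(n)}` is nonnegative on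
`ℝ^n` for every `n ≥ 4` iff for every `α ∈ [0,1]` the bivariate quartic form
`Φ_c^α(x,y) = Σ_{λ⊢4} c_λ Φ_λ(α, 1−α, x, y)` is nonnegative on `ℝ²`. -/
theorem mem_P4_iff_bivariate (c : Nat.Partition 4 → ℝ) :
    (∀ n : ℕ, 4 ≤ n → ∀ x : Fin n → ℝ, 0 ≤ eval x (symForm n c)) ↔
    (∀ α : ℝ, 0 ≤ α → α ≤ 1 → ∀ x y : ℝ,
      0 ≤ phiForm 2 c ![α, 1 - α] ![x, y]) := by
  refine ⟨fun h α hα0 hα1 x y => phiForm_two_nonneg_of_eval_symForm_nonneg 4 h hα0 hα1 x y,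
    fun h n hn x => ?_⟩
  rw [eval_symForm]
  refine phiForm_nonneg_of_forall_two_point h (fun _ => by positivity) ?_ x
  rw [Finset.sum_const, Finset.card_fin, nsmul_eq_mul, mul_inv_cancel₀ (by positivity)]
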